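/- Let H be a nonzero 2×2 complex matrix and let X(s₁,s₂) be the Alamouti matrix. Write X(s₁,s₂) = u₁A₁ + u₂A₂ + u₃A₃ + u₄A₄ with s₁ = u₁ + iu₂, s₂ = u₃ + iu₄, where A₁ = I₂, A₂ = diag(i,−i), A₃ = [[0,−1],[1,0]], A₄ = [[0,i],[i,0]]. Then the four matrices HA₁, HA₂, HA₃, HA₄, regarded as vectors in ℝ⁸, are pairwise orthogonal, each with squared norm ‖H‖_F². -/

import Mathlib

/-!
Each `Aₖ` is unitary, so `(HAₖ)(HAₖ)ᴴ = HHᴴ`, whose trace is `‖H‖_F²`. Distinct `Aₖ, Aₗ` satisfy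
`AₖAₗᴴ + AₗAₖᴴ = 0`, so `M = (HAₖ)(HAₗ)ᴴ` has `M + Mᴴ = 0`, and `Tr M` is purely imaginary.
-/

open Complex Matrix

noncomputable section

/-- The Alamouti map. -/
def alamouti (s₁ s₂ : ℂ) : Matrix (Fin 2) (Fin 2) ℂ :=
  !![s₁, -(starRingEnd ℂ s₂); s₂, starRingEnd ℂ s₁]

/-- The four matrices `A₁ = I₂`, `A₂ = diag(i,−i)`, `A₃ = [[0,−1],[1,0]]`,
`A₄ = [[0,i],[i,0]]` in the decomposition of the Alamouti code. -/
def alamoutiBasis : Fin 4 → Matrix (Fin 2) (Fin 2) ℂ :=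
  ![1, !![Complex.I, 0; 0, -Complex.I], !![0, -1; 1, 0], !![0, Complex.I; Complex.I, 0]]

section TraceInner

variable {𝕜 m n : Type*} [RCLike 𝕜] [Fintype m] [Fintype n]

theorem Matrix.re_trace_mul_conjTranspose_self (H : Matrix m n 𝕜) :
    RCLike.re (H * Hᴴ).trace = ∑ i, ∑ j, ‖H i j‖ ^ 2 := by
  simp only [trace, diag_apply, mul_apply, conjTranspose_apply, RCLike.star_def,
    RCLike.mul_conj, map_sum]
  norm_cast

theorem Matrix.re_trace_mul_mul_conjTranspose_mul_of_mul_conjTranspose_eq_one [DecidableEq n]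
    (H : Matrix m n 𝕜) {A : Matrix n n 𝕜} (hA : A * Aᴴ = 1) :
    RCLike.re ((H * A) * (H * A)ᴴ).trace = ∑ i, ∑ j, ‖H i j‖ ^ 2 := by
  rw [conjTranspose_mul, Matrix.mul_assoc, ← Matrix.mul_assoc A, hA, Matrix.one_mul,
    re_trace_mul_conjTranspose_self]

theorem Matrix.re_trace_mul_mul_conjTranspose_mul_of_anticomm (H : Matrix m n 𝕜)
    {A B : Matrix n n 𝕜} (hAB : A * Bᴴ + B * Aᴴ = 0) :
    RCLike.re ((H * A) * (H * B)ᴴ).trace = 0 := by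
  set M := (H * A) * (H * B)ᴴ
  have hM : M + Mᴴ = 0 := by
    calc M + Mᴴ = H * (A * Bᴴ + B * Aᴴ) * Hᴴ := by
          simp only [M, conjTranspose_mul, conjTranspose_conjTranspose, Matrix.mul_add,
            Matrix.add_mul, Matrix.mul_assoc]
      _ = 0 := by rw [hAB, Matrix.mul_zero, Matrix.zero_mul]
  have htr : M.trace + star M.trace = 0 := by
    rw [← trace_conjTranspose, ← trace_add, hM, trace_zero]
  have := congrArg RCLike.re htr
  rw [map_add, RCLike.star_def, RCLike.conj_re, map_zero] at this
  linarith

end TraceInner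

theorem alamouti_eq_sum_smul_alamoutiBasis (u : Fin 4 → ℝ) :
    alamouti ((u 0 : ℂ) + u 1 * Complex.I) ((u 2 : ℂ) + u 3 * Complex.I) =
      ∑ k : Fin 4, (u k : ℂ) • alamoutiBasis k := by
  ext i j
  fin_cases i <;> fin_cases j <;>
    simp [alamouti, alamoutiBasis, Fin.sum_univ_four, Complex.ext_iff]

theorem Matrix.conjTranspose_fin_two_of {α : Type*} [Star α] (a b c d : α) :
    !![a, b; c, d]ᴴ = !![star a, star c; star b, star d] := by
  ext i j; fin_cases i <;> fin_cases j <;> rfl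

theorem alamoutiBasis_mul_conjTranspose_self (k : Fin 4) :
    alamoutiBasis k * (alamoutiBasis k)ᴴ = 1 := by
  fin_cases k <;>
    simp [alamoutiBasis, conjTranspose_fin_two_of, Matrix.one_fin_two]

theorem alamoutiBasis_anticomm {k l : Fin 4} (hkl : k ≠ l) :
    alamoutiBasis k * (alamoutiBasis l)ᴴ + alamoutiBasis l * (alamoutiBasis k)ᴴ = 0 := by
  fin_cases k <;> fin_cases l <;>
    simp [alamoutiBasis, conjTranspose_fin_two_of, Matrix.one_fin_two, ← Matrix.ext_iff,
      Fin.forall_fin_two] at hkl ⊢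

theorem stmt_18_general (H : Matrix (Fin 2) (Fin 2) ℂ) :
    (∀ u : Fin 4 → ℝ,
      alamouti ((u 0 : ℂ) + u 1 * Complex.I) ((u 2 : ℂ) + u 3 * Complex.I) =
        ∑ k : Fin 4, (u k : ℂ) • alamoutiBasis k) ∧
    (∀ k l : Fin 4, k ≠ l →
      (((H * alamoutiBasis k) * (H * alamoutiBasis l)ᴴ).trace).re = 0) ∧
    (∀ k : Fin 4,
      (((H * alamoutiBasis k) * (H * alamoutiBasis k)ᴴ).trace).re =
        ∑ i : Fin 2, ∑ j : Fin 2, ‖H i j‖ ^ 2) :=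
  ⟨alamouti_eq_sum_smul_alamoutiBasis,
    fun _ _ hkl => H.re_trace_mul_mul_conjTranspose_mul_of_anticomm (alamoutiBasis_anticomm hkl),
    fun k => H.re_trace_mul_mul_conjTranspose_mul_of_mul_conjTranspose_eq_one
      (alamoutiBasis_mul_conjTranspose_self k)⟩

/-- Writing `X(s₁,s₂) = ∑ uₖ Aₖ` with `s₁ = u₁ + iu₂`, `s₂ = u₃ + iu₄`: for any nonzero
`H ∈ M₂(ℂ)`, the matrices `HA₁, …, HA₄`, regarded as vectors in `ℝ⁸` (with the real inner
product `⟨M,N⟩ = Re Tr(M·Nᴴ)`), are pairwise orthogonal, each of squared norm `‖H‖_F²`. -/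
theorem stmt_18 (H : Matrix (Fin 2) (Fin 2) ℂ) (hH : H ≠ 0) :
    (∀ u : Fin 4 → ℝ,
      alamouti ((u 0 : ℂ) + u 1 * Complex.I) ((u 2 : ℂ) + u 3 * Complex.I) =
        ∑ k : Fin 4, (u k : ℂ) • alamoutiBasis k) ∧
    (∀ k l : Fin 4, k ≠ l →
      (((H * alamoutiBasis k) * (H * alamoutiBasis l)ᴴ).trace).re = 0) ∧
    (∀ k : Fin 4,
      (((H * alamoutiBasis k) * (H * alamoutiBasis k)ᴴ).trace).re =
        ∑ i : Fin 2, ∑ j : Fin 2, ‖H i j‖ ^ 2) :=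
  stmt_18_general H

end
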